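/- arXiv:1603.04843 — 3 statements merged into one kernel-verified Lean document; each statement's English description precedes it below -/
import Mathlib

section
/- If p ∈ closure(E_A) and q ∈ E_{A, supp(p)} (the exponential family truncated to the support of p), then q ∈ closure(E_A). -/
/-! For `t > 0`, raising to the power `t`, multiplying by `exp ⟨θ, f_i⟩` and normalizing sends
`p_Θ` to `p_{tΘ + θ}` and is continuous on the probability simplex, so it maps `closure E_A` into
itself. Applied to `p` it yields points of the closure that converge to `p_{supp p, θ}` as
`t → 0⁺`, because `p_i ^ t → 1` on the support of `p` while `0 ^ t = 0`. -/

/-- The discrete exponential family `E_A` as a set of distributions on `I`. -/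
noncomputable def expFam {I J : Type} [Fintype I] [Fintype J] (A : J → I → ℝ) :
    Set (I → ℝ) :=
  {q | ∃ θ : J → ℝ, q = fun i =>
    Real.exp (∑ j, θ j * A j i - Real.log (∑ i', Real.exp (∑ j, θ j * A j i')))}

/-- The truncation `p_{F,θ}` of the family to a set `F`. -/
noncomputable def ptrunc {I J : Type} [Fintype I] [Fintype J] [DecidableEq I]
    (A : J → I → ℝ) (F : Finset I) (θ : J → ℝ) (i : I) : ℝ :=
  if i ∈ F then
    Real.exp (∑ j, θ j * A j i - Real.log (∑ i' ∈ F, Real.exp (∑ j, θ j * A j i')))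
  else 0

open Filter Topology Real Finset

theorem tendsto_rpow_nhdsGT_zero (a : ℝ) :
    Tendsto (fun t : ℝ => a ^ t) (𝓝[>] 0) (𝓝 (if a = 0 then 0 else 1)) := by
  split_ifs with ha
  · refine tendsto_const_nhds.congr' ?_
    filter_upwards [self_mem_nhdsWithin] with t ht
    rw [ha, zero_rpow (ne_of_gt ht)]
  · simpa only [rpow_zero] using (continuousAt_const_rpow (b := 0) ha).tendsto.mono_left
      nhdsWithin_le_nhds

section

variable {I J : Type} [Fintype J]

noncomputable def expWeight (A : J → I → ℝ) (θ : J → ℝ) (i : I) : ℝ := exp (∑ j, θ j * A j i)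

theorem expWeight_pos (A : J → I → ℝ) (θ : J → ℝ) (i : I) : 0 < expWeight A θ i := exp_pos _

theorem expWeight_smul_add (A : J → I → ℝ) (t : ℝ) (Θ θ : J → ℝ) (i : I) :
    expWeight A (t • Θ + θ) i = expWeight A Θ i ^ t * expWeight A θ i := by
  simp only [expWeight, ← exp_mul, ← exp_add, Pi.add_apply, Pi.smul_apply, smul_eq_mul, add_mul,
    sum_add_distrib, sum_mul, mul_assoc, mul_comm t]

variable [Fintype I]

noncomputable def normalized (q : I → ℝ) : I → ℝ := (∑ i, q i)⁻¹ • q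

theorem normalized_smul {c : ℝ} (hc : c ≠ 0) (q : I → ℝ) :
    normalized (c • q) = normalized q := by
  simp only [normalized, Pi.smul_apply, smul_eq_mul, ← mul_sum, mul_inv, smul_smul,
    mul_comm c⁻¹, inv_mul_cancel_right₀ hc]

theorem continuousAt_normalized {q : I → ℝ} (hq : ∑ i, q i ≠ 0) :
    ContinuousAt normalized q :=
  ((continuous_finsetSum _ fun i _ => continuous_apply i).continuousAt.inv₀ hq).smul
    continuousAt_id

theorem expFam_eq_range (A : J → I → ℝ) :
    expFam A = Set.range fun θ => normalized (expWeight A θ) := by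
  ext q
  refine exists_congr fun θ => ?_
  suffices h : (fun i => exp (∑ j, θ j * A j i - log (∑ i', exp (∑ j, θ j * A j i'))))
      = normalized (expWeight A θ) by rw [h, eq_comm]
  ext i
  have hZ : 0 < ∑ i', exp (∑ j, θ j * A j i') := sum_pos (fun i _ => exp_pos _) ⟨i, mem_univ i⟩
  rw [exp_sub, exp_log hZ, div_eq_inv_mul]
  rfl

theorem ptrunc_eq_normalized [DecidableEq I] (A : J → I → ℝ) (F : Finset I) (θ : J → ℝ) :
    ptrunc A F θ = normalized fun i => if i ∈ F then expWeight A θ i else 0 := by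
  ext i
  rw [normalized, Pi.smul_apply, smul_eq_mul, sum_ite_mem, univ_inter, ptrunc]
  split_ifs with hi
  · have hZ : 0 < ∑ i' ∈ F, exp (∑ j, θ j * A j i') := sum_pos (fun i _ => exp_pos _) ⟨i, hi⟩
    rw [exp_sub, exp_log hZ, div_eq_inv_mul]
    rfl
  · rw [mul_zero]

theorem expFam_subset_stdSimplex [Nonempty I] (A : J → I → ℝ) : expFam A ⊆ stdSimplex ℝ I := by
  rw [expFam_eq_range]
  rintro _ ⟨θ, rfl⟩
  have hZ : 0 < ∑ i, expWeight A θ i := sum_pos (fun i _ => expWeight_pos A θ i) univ_nonempty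
  refine ⟨fun i => ?_, ?_⟩
  · exact smul_nonneg (inv_nonneg.2 hZ.le) (expWeight_pos A θ i).le
  · simp only [normalized, Pi.smul_apply, smul_eq_mul, ← mul_sum, inv_mul_cancel₀ hZ.ne']

theorem closure_expFam_subset_stdSimplex [Nonempty I] (A : J → I → ℝ) :
    closure (expFam A) ⊆ stdSimplex ℝ I :=
  closure_minimal (expFam_subset_stdSimplex A) (isClosed_stdSimplex ℝ I)

noncomputable def powTilt (A : J → I → ℝ) (t : ℝ) (θ : J → ℝ) (q : I → ℝ) : I → ℝ :=
  normalized fun i => q i ^ t * expWeight A θ i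

theorem powTilt_normalized_expWeight [Nonempty I] (A : J → I → ℝ) (t : ℝ) (θ Θ : J → ℝ) :
    powTilt A t θ (normalized (expWeight A Θ)) = normalized (expWeight A (t • Θ + θ)) := by
  set c := (∑ i, expWeight A Θ i)⁻¹
  have hc : 0 < c := inv_pos.2 (sum_pos (fun i _ => expWeight_pos A Θ i) univ_nonempty)
  have h : (fun i => (c * expWeight A Θ i) ^ t * expWeight A θ i)
      = c ^ t • expWeight A (t • Θ + θ) := by
    ext i
    rw [Pi.smul_apply, smul_eq_mul, expWeight_smul_add, mul_rpow hc.le (expWeight_pos A Θ i).le,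
      mul_assoc]
  exact (congrArg normalized h).trans (normalized_smul (rpow_pos_of_pos hc t).ne' _)

theorem mapsTo_powTilt_expFam [Nonempty I] (A : J → I → ℝ) (t : ℝ) (θ : J → ℝ) :
    Set.MapsTo (powTilt A t θ) (expFam A) (expFam A) := by
  rw [expFam_eq_range]
  rintro _ ⟨Θ, rfl⟩
  exact ⟨t • Θ + θ, (powTilt_normalized_expWeight A t θ Θ).symm⟩

theorem sum_rpow_mul_expWeight_pos {q : I → ℝ} (hq : q ∈ stdSimplex ℝ I) (A : J → I → ℝ) (t : ℝ)
    (θ : J → ℝ) : 0 < ∑ i, q i ^ t * expWeight A θ i := by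
  obtain ⟨i, hi⟩ : ∃ i, 0 < q i := by
    by_contra! h
    have : ∑ i, q i = 0 := sum_eq_zero fun i _ => (h i).antisymm (hq.1 i)
    exact zero_ne_one (this.symm.trans hq.2)
  exact sum_pos' (fun i _ => mul_nonneg (rpow_nonneg (hq.1 i) t) (expWeight_pos A θ i).le)
    ⟨i, mem_univ i, mul_pos (rpow_pos_of_pos hi t) (expWeight_pos A θ i)⟩

theorem continuousOn_powTilt (A : J → I → ℝ) {t : ℝ} (ht : 0 < t) (θ : J → ℝ) :
    ContinuousOn (powTilt A t θ) (stdSimplex ℝ I) := fun _ hq =>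
  ((continuousAt_normalized (sum_rpow_mul_expWeight_pos hq A t θ).ne').comp
    (continuous_pi fun i => ((continuous_rpow_const ht.le).comp (continuous_apply i)).mul
      continuous_const).continuousAt).continuousWithinAt

theorem powTilt_mem_closure_expFam [Nonempty I] (A : J → I → ℝ) {t : ℝ} (ht : 0 < t)
    (θ : J → ℝ) {q : I → ℝ} (hq : q ∈ closure (expFam A)) :
    powTilt A t θ q ∈ closure (expFam A) := by
  have himage := ((continuousOn_powTilt A ht θ).mono
    (closure_expFam_subset_stdSimplex A)).image_closure ⟨q, hq, rfl⟩
  exact closure_mono (mapsTo_powTilt_expFam A t θ).image_subset himage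

open Classical in
theorem tendsto_powTilt_nhdsGT_zero [DecidableEq I] (A : J → I → ℝ) (θ : J → ℝ) {p : I → ℝ}
    (hp : ∃ i, p i ≠ 0) :
    Tendsto (fun t => powTilt A t θ p) (𝓝[>] 0)
      (𝓝 (ptrunc A (univ.filter fun i => p i ≠ 0) θ)) := by
  rw [ptrunc_eq_normalized]
  obtain ⟨i₀, hi₀⟩ := hp
  have hZ : 0 < ∑ i, if i ∈ univ.filter fun i => p i ≠ 0 then expWeight A θ i else 0 := by
    refine sum_pos' (fun i _ => ?_) ⟨i₀, mem_univ i₀, ?_⟩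
    · split_ifs
      exacts [(expWeight_pos A θ i).le, le_rfl]
    · rw [if_pos (mem_filter.2 ⟨mem_univ i₀, hi₀⟩)]
      exact expWeight_pos A θ i₀
  refine (continuousAt_normalized hZ.ne').tendsto.comp (tendsto_pi_nhds.2 fun i => ?_)
  convert (tendsto_rpow_nhdsGT_zero (p i)).mul_const (expWeight A θ i) using 2
  by_cases hi : p i = 0 <;> simp [hi]

end

open Classical in
/-- If `p ∈ closure(E_A)` and `q ∈ E_{A, supp(p)}` (the exponential family
truncated to the support of `p`), then `q ∈ closure(E_A)`. -/
theorem truncation_to_support_mem_closure {I J : Type} [Fintype I] [Fintype J]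
    [DecidableEq I] (A : J → I → ℝ) (p : I → ℝ) (hp : p ∈ closure (expFam A))
    (θ : J → ℝ) :
    ptrunc A (Finset.univ.filter fun i => p i ≠ 0) θ ∈ closure (expFam A) := by
  rcases isEmpty_or_nonempty I with hI | hI
  · rwa [Subsingleton.elim (ptrunc A _ θ) p]
  have hp_support : ∃ i, p i ≠ 0 := by
    by_contra! h
    simpa [h] using (closure_expFam_subset_stdSimplex A hp).2
  refine isClosed_closure.mem_of_tendsto (tendsto_powTilt_nhdsGT_zero A θ hp_support) ?_
  filter_upwards [self_mem_nhdsWithin] with t ht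
  exact powTilt_mem_closure_expFam A ht θ hp
end

section
/- Given observed counts n with sufficient statistic t = An and N = Σ_i n(i) > 0, the log-likelihood p ↦ Σ_i n(i) log p(i) attains a unique maximum p* over the closure of E_A, and this extended MLE satisfies: (1) A p* = t/N, (2) supp(p*) = F_t (the smallest facial set containing supp(n)), (3) p* ∈ E_{F_t, A}. -/
/-- `F` is a facial set of `P_A = conv{f_i}`: the set of maximizers of a linear
functional `g` over the columns. -/
def FacialF {I J : Type} [Fintype I] [Fintype J] (A : J → I → ℝ) (F : Finset I) : Prop :=
  ∃ g : J → ℝ, ∀ i, i ∈ F ↔ ∀ i', ∑ j, g j * A j i' ≤ ∑ j, g j * A j i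

/-!
The log-likelihood of `p_{F_t,θ}` is `ℓ(θ) = ⟨θ, t⟩ - N log ∑_{i ∈ F_t} exp ⟨θ, f_i⟩`. It is
invariant under adding constants to `⟨θ, f_i⟩` and otherwise coercive: if `⟨v, f_i⟩ ≤ M` on `F_t`
with `n`-weighted mean `M`, the maximizers of `v` on `F_t` form a facial set containing `supp n`,
hence all of `F_t` by minimality. So `ℓ` has a maximizer `θ*`, and `p* = p_{F_t,θ*}` satisfies the
first-order conditions `A p* = t/N`. Pushing `θ*` to infinity along a functional exposing `F_t`
shows `p* ∈ closure E_A`; the likelihood of `p_θ ∈ E_A` is at most `ℓ(θ) ≤ ℓ(θ*)`, and this bound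
passes to the closure by continuity. Uniqueness: for `p, q ∈ E_{F_t,A}` with `A p = A q`,
`log p - log q` is affine in `f_i` on `F_t`, so `∑ (p_i - q_i) (log p_i - log q_i) = 0`, and every
term is nonnegative.
-/

open Real Finset Filter Topology Matrix

section Softmax

variable {I : Type} {F : Finset I} {x y : I → ℝ} {i : I}

lemma sum_exp_pos (hF : F.Nonempty) : 0 < ∑ k ∈ F, exp (x k) :=
  sum_pos (fun _ _ => exp_pos _) hF

variable [DecidableEq I]

noncomputable def softmax (F : Finset I) (x : I → ℝ) (i : I) : ℝ :=
  if i ∈ F then exp (x i) / ∑ k ∈ F, exp (x k) else 0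

lemma softmax_of_mem (hi : i ∈ F) : softmax F x i = exp (x i) / ∑ k ∈ F, exp (x k) :=
  if_pos hi

lemma softmax_of_notMem (hi : i ∉ F) : softmax F x i = 0 :=
  if_neg hi

lemma softmax_pos (hi : i ∈ F) : 0 < softmax F x i := by
  rw [softmax_of_mem hi]
  exact div_pos (exp_pos _) (sum_exp_pos ⟨i, hi⟩)

lemma softmax_ne_zero_iff : softmax F x i ≠ 0 ↔ i ∈ F :=
  ⟨fun h => by_contra fun hi => h (softmax_of_notMem hi), fun hi => (softmax_pos hi).ne'⟩

lemma log_softmax (hi : i ∈ F) :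
    log (softmax F x i) = x i - log (∑ k ∈ F, exp (x k)) := by
  rw [softmax_of_mem hi, log_div (exp_pos _).ne' (sum_exp_pos ⟨i, hi⟩).ne', log_exp]

lemma softmax_add_const (c : ℝ) : softmax F (fun i => x i + c) = softmax F x := by
  ext i
  simp only [softmax, exp_add, ← sum_mul]
  split_ifs
  · exact mul_div_mul_right _ _ (exp_pos c).ne'
  · rfl

variable [Fintype I]

lemma sum_softmax (hF : F.Nonempty) : ∑ i, softmax F x i = 1 := by
  rw [← sum_subset (subset_univ F) fun i _ hi => softmax_of_notMem hi,
    sum_congr rfl fun i hi => softmax_of_mem hi, ← sum_div, div_self (sum_exp_pos hF).ne']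

lemma tendsto_softmax_univ_add_smul (hF : F.Nonempty) {M : ℝ} (hyF : ∀ i ∈ F, y i = M)
    (hy : ∀ i ∉ F, y i < M) :
    Tendsto (fun s : ℝ => softmax univ (x + s • y)) atTop (𝓝 (softmax F x)) := by
  have hshift : ∀ s : ℝ, softmax univ (x + s • y)
      = softmax univ fun i => x i + s * (y i - M) := fun s => by
    rw [← softmax_add_const (-(s * M))]
    congr 1; ext i; simp only [Pi.add_apply, Pi.smul_apply, smul_eq_mul]; ring
  have hexp : ∀ i, Tendsto (fun s : ℝ => exp (x i + s * (y i - M))) atTop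
      (𝓝 (if i ∈ F then exp (x i) else 0)) := fun i => by
    split_ifs with hi
    · simp [hyF i hi]
    · exact tendsto_exp_atBot.comp <| tendsto_atBot_add_const_left _ _ <|
        tendsto_id.atTop_mul_const_of_neg (sub_neg.2 (hy i hi))
  have hsum : Tendsto (fun s : ℝ => ∑ k, exp (x k + s * (y k - M))) atTop
      (𝓝 (∑ k ∈ F, exp (x k))) := by
    simpa only [sum_ite_mem, univ_inter] using tendsto_finsetSum univ fun k _ => hexp k
  simp_rw [hshift]
  refine tendsto_pi_nhds.2 fun i => ?_
  have := (hexp i).div hsum (sum_exp_pos hF).ne'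
  by_cases hi : i ∈ F <;> simpa [softmax, hi, Pi.div_def] using this

end Softmax

section LogLik

variable {I : Type} [Fintype I] {F F' : Finset I} {w x y : I → ℝ}

noncomputable def softmaxLogLik (F : Finset I) (w x : I → ℝ) : ℝ :=
  ∑ i, w i * x i - (∑ i, w i) * log (∑ i ∈ F, exp (x i))

lemma softmaxLogLik_add_const (hF : F.Nonempty) (c : ℝ) :
    softmaxLogLik F w (fun i => x i + c) = softmaxLogLik F w x := by
  simp only [softmaxLogLik, exp_add, ← sum_mul, log_mul (sum_exp_pos hF).ne' (exp_pos c).ne',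
    log_exp, mul_add, sum_add_distrib]
  ring

lemma softmaxLogLik_congr (hw : ∀ i, w i ≠ 0 → i ∈ F) (h : ∀ i ∈ F, x i = y i) :
    softmaxLogLik F w x = softmaxLogLik F w y := by
  have hlin : ∑ i, w i * x i = ∑ i, w i * y i := sum_congr rfl fun i _ => by
    by_cases hwi : w i = 0
    · simp [hwi]
    · rw [h i (hw i hwi)]
  have hZ : ∑ i ∈ F, exp (x i) = ∑ i ∈ F, exp (y i) := sum_congr rfl fun i hi => by rw [h i hi]
  rw [softmaxLogLik, softmaxLogLik, hlin, hZ]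

lemma softmaxLogLik_le_of_subset (hF : F.Nonempty) (hFF' : F ⊆ F') (hw : 0 ≤ ∑ i, w i) :
    softmaxLogLik F' w x ≤ softmaxLogLik F w x := by
  unfold softmaxLogLik
  gcongr

lemma softmaxLogLik_le_sup' (hF : F.Nonempty) (hw : ∀ i, 0 ≤ w i) :
    softmaxLogLik F w x ≤ ∑ i, w i * x i - (∑ i, w i) * F.sup' hF x := by
  unfold softmaxLogLik
  gcongr
  · exact sum_nonneg fun i _ => hw i
  obtain ⟨k, hk, hmax⟩ := exists_mem_eq_sup' hF x
  rw [hmax, le_log_iff_exp_le (sum_exp_pos hF)]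
  exact single_le_sum (fun i _ => (exp_pos (x i)).le) hk

lemma continuous_softmaxLogLik (hne : F.Nonempty) : Continuous (softmaxLogLik F w) := by
  unfold softmaxLogLik
  fun_prop (disch := exact fun x => (sum_exp_pos hne).ne')

variable [DecidableEq I]

lemma sum_mul_log_softmax (hw : ∀ i, w i ≠ 0 → i ∈ F) :
    ∑ i, w i * log (softmax F x i) = softmaxLogLik F w x := by
  rw [softmaxLogLik, sum_mul, ← sum_sub_distrib]
  refine sum_congr rfl fun i _ => ?_
  by_cases hwi : w i = 0
  · simp [hwi]
  · rw [log_softmax (hw i hwi)]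
    ring

lemma sum_mul_softmax :
    ∑ i, y i * softmax F x i = (∑ i ∈ F, y i * exp (x i)) / ∑ i ∈ F, exp (x i) := by
  rw [← sum_subset (subset_univ F) fun i _ hi => by rw [softmax_of_notMem hi, mul_zero],
    sum_div]
  exact sum_congr rfl fun i hi => by rw [softmax_of_mem hi, mul_div_assoc]

lemma hasDerivAt_softmaxLogLik_add_smul (hF : F.Nonempty) :
    HasDerivAt (fun s : ℝ => softmaxLogLik F w (x + s • y))
      (∑ i, w i * y i - (∑ i, w i) * ∑ i, y i * softmax F x i) 0 := by
  have hline : ∀ i, HasDerivAt (fun s : ℝ => x i + s * y i) (y i) 0 := fun i => by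
    simpa using ((hasDerivAt_id (0 : ℝ)).mul_const (y i)).const_add (x i)
  have hlin : HasDerivAt (fun s : ℝ => ∑ i, w i * (x i + s * y i)) (∑ i, w i * y i) 0 :=
    HasDerivAt.fun_sum fun i _ => (hline i).const_mul (w i)
  have hZ : HasDerivAt (fun s : ℝ => ∑ i ∈ F, exp (x i + s * y i))
      (∑ i ∈ F, y i * exp (x i)) 0 :=
    HasDerivAt.fun_sum fun i _ => by simpa [mul_comm] using (hline i).exp
  have hlog := hZ.log (by simpa using (sum_exp_pos hF).ne')
  change HasDerivAt (fun s : ℝ =>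
    ∑ i, w i * (x i + s * y i) - (∑ i, w i) * log (∑ i ∈ F, exp (x i + s * y i))) _ 0
  simpa [sum_mul_softmax] using hlin.fun_sub (hlog.const_mul (∑ i, w i))

lemma sum_mul_eq_of_forall_le (hF : F.Nonempty)
    (h : ∀ s : ℝ, softmaxLogLik F w (x + s • y) ≤ softmaxLogLik F w x) :
    ∑ i, w i * y i = (∑ i, w i) * ∑ i, y i * softmax F x i := by
  have hmax : IsLocalMax (fun s : ℝ => softmaxLogLik F w (x + s • y)) 0 :=
    Eventually.of_forall fun s => by simpa using h s
  linarith [hmax.hasDerivAt_eq_zero (hasDerivAt_softmaxLogLik_add_smul hF)]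

end LogLik

section WeightedMean

variable {I : Type} [Fintype I] {w y : I → ℝ} {M : ℝ}

lemma sum_mul_le_sum_mul (hw : ∀ i, 0 ≤ w i) (hle : ∀ i, w i ≠ 0 → y i ≤ M) :
    ∑ i, w i * y i ≤ (∑ i, w i) * M := by
  rw [sum_mul]
  refine sum_le_sum fun i _ => ?_
  by_cases hwi : w i = 0
  · simp [hwi]
  · exact mul_le_mul_of_nonneg_left (hle i hwi) (hw i)

lemma eq_of_sum_mul_eq_sum_mul (hw : ∀ i, 0 ≤ w i) (hle : ∀ i, w i ≠ 0 → y i ≤ M)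
    (h : ∑ i, w i * y i = (∑ i, w i) * M) {i : I} (hi : w i ≠ 0) : y i = M := by
  have hterm : ∀ k ∈ univ, 0 ≤ w k * (M - y k) := fun k _ => by
    by_cases hk : w k = 0
    · simp [hk]
    · exact mul_nonneg (hw k) (sub_nonneg.2 (hle k hk))
  have hsum : ∑ k, w k * (M - y k) = 0 := by
    simp only [mul_sub, sum_sub_distrib, ← sum_mul, h, sub_self]
  have := (sum_eq_zero_iff_of_nonneg hterm).1 hsum i (mem_univ i)
  linarith [(mul_eq_zero.1 this).resolve_left hi]

end WeightedMean

lemma sub_mul_log_sub_nonneg {a b : ℝ} (ha : 0 < a) (hb : 0 < b) :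
    0 ≤ (a - b) * (log a - log b) := by
  rcases le_total a b with h | h
  · exact mul_nonneg_of_nonpos_of_nonpos (sub_nonpos.2 h) (sub_nonpos.2 (log_le_log ha h))
  · exact mul_nonneg (sub_nonneg.2 h) (sub_nonneg.2 (log_le_log hb h))

section Coercive

variable {E : Type*} [NormedAddCommGroup E] [NormedSpace ℝ E] [FiniteDimensional ℝ E]
  {G φ : E → ℝ}

lemma exists_pos_forall_le_neg_mul_norm (hφ : Continuous φ)
    (hhom : ∀ r : ℝ, 0 ≤ r → ∀ x, φ (r • x) = r * φ x) (hneg : ∀ x, x ≠ 0 → φ x < 0) :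
    ∃ c > 0, ∀ x, φ x ≤ -c * ‖x‖ := by
  have hφ0 : φ 0 = 0 := by simpa using hhom 0 le_rfl 0
  rcases subsingleton_or_nontrivial E with hE | hE
  · exact ⟨1, one_pos, fun x => by simp [Subsingleton.elim x 0, hφ0]⟩
  obtain ⟨x₀, hx₀, hmax⟩ := (isCompact_sphere (0 : E) 1).exists_isMaxOn
    (NormedSpace.sphere_nonempty.2 zero_le_one) hφ.continuousOn
  have hx₀0 : x₀ ≠ 0 := ne_zero_of_mem_sphere one_ne_zero ⟨x₀, hx₀⟩
  refine ⟨-φ x₀, neg_pos.2 (hneg x₀ hx₀0), fun x => ?_⟩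
  rcases eq_or_ne x 0 with rfl | hx
  · simp [hφ0]
  have hnx : 0 < ‖x‖ := norm_pos_iff.2 hx
  have hy : ‖x‖⁻¹ • x ∈ Metric.sphere (0 : E) 1 := by simp [norm_smul, hnx.ne']
  calc φ x = ‖x‖ * φ (‖x‖⁻¹ • x) := by
        rw [← hhom _ hnx.le, smul_smul, mul_inv_cancel₀ hnx.ne', one_smul]
    _ ≤ ‖x‖ * φ x₀ := mul_le_mul_of_nonneg_left (hmax hy) hnx.le
    _ = -(-φ x₀) * ‖x‖ := by ring

lemma Continuous.exists_forall_ge_of_le_homogeneous (hG : Continuous G) (hφ : Continuous φ)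
    (hhom : ∀ r : ℝ, 0 ≤ r → ∀ x, φ (r • x) = r * φ x) (hneg : ∀ x, x ≠ 0 → φ x < 0)
    (hle : ∀ x, G x ≤ φ x) : ∃ x, ∀ y, G y ≤ G x := by
  obtain ⟨c, hc, hφc⟩ := exists_pos_forall_le_neg_mul_norm hφ hhom hneg
  refine hG.exists_forall_ge (tendsto_atBot_mono (fun x => (hle x).trans (hφc x)) ?_)
  exact (tendsto_const_mul_atBot_of_neg (neg_neg_of_pos hc)).2 tendsto_norm_cocompact_atTop

end Coercive

section Facial

-- `A` is read as a matrix so that `(θ ᵥ* A) i = ∑ j, θ j * A j i` is the pairing `⟨θ, f_i⟩`.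
variable {I J : Type} [Fintype I] [Fintype J] {A : Matrix J I ℝ} {F : Finset I}

lemma facialF_iff : FacialF A F ↔ ∃ g : J → ℝ, ∀ i, i ∈ F ↔ ∀ i', (g ᵥ* A) i' ≤ (g ᵥ* A) i :=
  Iff.rfl

lemma FacialF.exists_vecMul (hF : FacialF A F) (hne : F.Nonempty) :
    ∃ g : J → ℝ, ∃ M, (∀ i ∈ F, (g ᵥ* A) i = M) ∧ ∀ i ∉ F, (g ᵥ* A) i < M := by
  obtain ⟨g, hg⟩ := facialF_iff.1 hF
  obtain ⟨i₀, hi₀⟩ := hne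
  have hmax : ∀ i, (g ᵥ* A) i ≤ (g ᵥ* A) i₀ := (hg i₀).1 hi₀
  refine ⟨g, (g ᵥ* A) i₀, fun i hi => le_antisymm (hmax i) ((hg i).1 hi i₀), fun i hi => ?_⟩
  exact lt_of_not_ge fun h => hi ((hg i).2 fun i' => (hmax i').trans h)

lemma FacialF.filter_vecMul_eq (hF : FacialF A F) {v : J → ℝ} {M : ℝ}
    (hle : ∀ i ∈ F, (v ᵥ* A) i ≤ M) {i₀ : I} (hi₀ : i₀ ∈ F) (hM : (v ᵥ* A) i₀ = M) :
    FacialF A {i ∈ F | (v ᵥ* A) i = M} := by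
  obtain ⟨g, Mg, hgF, hg⟩ := hF.exists_vecMul ⟨i₀, hi₀⟩
  obtain ⟨R, hR⟩ : ∃ R : ℝ, ∀ i ∉ F, (v ᵥ* A) i - M < R * (Mg - (g ᵥ* A) i) := by
    have : ∀ i, ∀ᶠ R in atTop, i ∉ F → (v ᵥ* A) i - M < R * (Mg - (g ᵥ* A) i) := fun i => by
      by_cases hi : i ∈ F
      · simp [hi]
      · exact ((tendsto_id.atTop_mul_const (sub_pos.2 (hg i hi))).eventually_gt_atTop _).mono
          fun R hR _ => hR
    exact (eventually_all.2 this).exists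
  -- a large multiple of `g` keeps the maximizers inside `F`, where `v` then selects them
  have hval : ∀ i, ((R • g + v) ᵥ* A) i = R * (g ᵥ* A) i + (v ᵥ* A) i := fun i => by
    simp [add_vecMul, smul_vecMul]
  have hin : ∀ i ∈ F, ((R • g + v) ᵥ* A) i = R * Mg + (v ᵥ* A) i := fun i hi => by
    rw [hval, hgF i hi]
  have hout : ∀ i ∉ F, ((R • g + v) ᵥ* A) i < R * Mg + M := fun i hi => by
    have := hR i hi
    rw [hval]
    linarith [mul_sub R Mg ((g ᵥ* A) i)]
  have hbound : ∀ i, ((R • g + v) ᵥ* A) i ≤ R * Mg + M := fun i => by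
    by_cases hi : i ∈ F
    · rw [hin i hi]; linarith [hle i hi]
    · exact (hout i hi).le
  refine facialF_iff.2 ⟨R • g + v, fun i => ⟨fun hi i' => ?_, fun hi => ?_⟩⟩
  · obtain ⟨hiF, hvi⟩ := mem_filter.1 hi
    rw [hin i hiF, hvi]
    exact hbound i'
  · have htop : R * Mg + M ≤ ((R • g + v) ᵥ* A) i := by simpa [hin i₀ hi₀, hM] using hi i₀
    have hiF : i ∈ F := by_contra fun hiF => (hout i hiF).not_ge htop
    refine mem_filter.2 ⟨hiF, ?_⟩
    rw [hin i hiF] at htop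
    linarith [hle i hiF]

/-- The maximizers of `θ ᵥ* A` over `F` form a facial set containing `supp w`, hence all of `F`. -/
lemma eq_on_of_sum_mul_eq {w : I → ℝ} (hF : FacialF A F)
    (hmin : ∀ F' : Finset I, FacialF A F' → (∀ i, w i ≠ 0 → i ∈ F') → F ⊆ F')
    (hw : ∀ i, 0 ≤ w i) (hsupp : ∀ i, w i ≠ 0 → i ∈ F) {i₀ : I} (hi₀ : w i₀ ≠ 0) {θ : J → ℝ} {M : ℝ}
    (hle : ∀ i ∈ F, (θ ᵥ* A) i ≤ M) (hmean : ∑ i, w i * (θ ᵥ* A) i = (∑ i, w i) * M) :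
    ∀ i ∈ F, (θ ᵥ* A) i = M := by
  have hsuppM : ∀ i, w i ≠ 0 → (θ ᵥ* A) i = M := fun i hi =>
    eq_of_sum_mul_eq_sum_mul hw (fun k hk => hle k (hsupp k hk)) hmean hi
  have hsub := hmin _ (hF.filter_vecMul_eq hle (hsupp i₀ hi₀) (hsuppM i₀ hi₀))
    fun i hi => mem_filter.2 ⟨hsupp i hi, hsuppM i hi⟩
  exact fun i hi => (mem_filter.1 (hsub hi)).2

variable [DecidableEq I]

lemma ptrunc_eq_softmax (θ : J → ℝ) : ptrunc A F θ = softmax F (θ ᵥ* A) := by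
  ext i
  unfold ptrunc softmax
  split_ifs with hi
  · rw [exp_sub, exp_log (sum_exp_pos ⟨i, hi⟩)]
    rfl
  · rfl

lemma ptrunc_ne_zero_iff {θ : J → ℝ} {i : I} : ptrunc A F θ i ≠ 0 ↔ i ∈ F := by
  rw [ptrunc_eq_softmax]
  exact softmax_ne_zero_iff

lemma expFam_eq_range_softmax : expFam A = Set.range fun θ => softmax univ (θ ᵥ* A) := by
  have h : ∀ θ : J → ℝ, softmax univ (θ ᵥ* A) = fun i =>
      exp (∑ j, θ j * A j i - log (∑ i', exp (∑ j, θ j * A j i'))) := fun θ => by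
    rw [← ptrunc_eq_softmax]
    exact funext fun i => if_pos (mem_univ i)
  ext q
  simp only [Set.mem_range, h, eq_comm (b := q)]
  rfl

lemma FacialF.ptrunc_mem_closure_expFam (hF : FacialF A F) (hne : F.Nonempty) (θ : J → ℝ) :
    ptrunc A F θ ∈ closure (expFam A) := by
  obtain ⟨g, M, hgF, hg⟩ := hF.exists_vecMul hne
  rw [ptrunc_eq_softmax, expFam_eq_range_softmax]
  refine mem_closure_of_tendsto (tendsto_softmax_univ_add_smul hne hgF hg)
    (Eventually.of_forall fun s => ⟨θ + s • g, ?_⟩)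
  dsimp only
  rw [add_vecMul, smul_vecMul]

end Facial

section Existence

variable {I J : Type} [Fintype J] [DecidableEq I] {A : Matrix J I ℝ} {F : Finset I}
  {w : I → ℝ} {i₀ : I}

variable (A F i₀) in
/-- The truncated log-likelihood factors through this map, and is coercive on its range. -/
noncomputable def centeredVecMul : (J → ℝ) →ₗ[ℝ] (I → ℝ) where
  toFun θ i := if i ∈ F then (θ ᵥ* A) i - (θ ᵥ* A) i₀ else 0
  map_add' θ θ' := by
    ext i
    by_cases hi : i ∈ F <;> simp [hi, add_vecMul]
    ring
  map_smul' r θ := by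
    ext i
    by_cases hi : i ∈ F <;> simp [hi, smul_vecMul, mul_sub]

lemma centeredVecMul_apply (θ : J → ℝ) (i : I) :
    centeredVecMul A F i₀ θ i = if i ∈ F then (θ ᵥ* A) i - (θ ᵥ* A) i₀ else 0 :=
  rfl

variable [Fintype I]

lemma softmaxLogLik_centeredVecMul (hsupp : ∀ i, w i ≠ 0 → i ∈ F) (hne : F.Nonempty)
    (θ : J → ℝ) :
    softmaxLogLik F w (centeredVecMul A F i₀ θ) = softmaxLogLik F w (θ ᵥ* A) := by
  rw [softmaxLogLik_congr hsupp (y := fun i => (θ ᵥ* A) i + -(θ ᵥ* A) i₀),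
    softmaxLogLik_add_const hne]
  intro i hi
  rw [centeredVecMul_apply, if_pos hi, sub_eq_add_neg]

lemma sum_mul_centeredVecMul_lt (hF : FacialF A F)
    (hmin : ∀ F' : Finset I, FacialF A F' → (∀ i, w i ≠ 0 → i ∈ F') → F ⊆ F')
    (hw : ∀ i, 0 ≤ w i) (hsupp : ∀ i, w i ≠ 0 → i ∈ F) (hi₀ : w i₀ ≠ 0) {θ : J → ℝ}
    (hθ : centeredVecMul A F i₀ θ ≠ 0) :
    ∑ i, w i * centeredVecMul A F i₀ θ i
      < (∑ i, w i) * F.sup' ⟨i₀, hsupp i₀ hi₀⟩ (centeredVecMul A F i₀ θ) := by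
  have hx : ∀ i ∈ F, (θ ᵥ* A) i = centeredVecMul A F i₀ θ i + (θ ᵥ* A) i₀ := fun i hi => by
    rw [centeredVecMul_apply, if_pos hi]
    ring
  set x := centeredVecMul A F i₀ θ
  set M := F.sup' ⟨i₀, hsupp i₀ hi₀⟩ x
  set c := (θ ᵥ* A) i₀
  have hle : ∀ i ∈ F, (θ ᵥ* A) i ≤ M + c := fun i hi => by
    linarith [hx i hi, le_sup' x hi]
  have hmean : ∑ i, w i * (θ ᵥ* A) i = ∑ i, w i * x i + (∑ i, w i) * c := by
    rw [sum_mul, ← sum_add_distrib]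
    refine sum_congr rfl fun i _ => ?_
    by_cases hwi : w i = 0
    · simp [hwi]
    · rw [hx i (hsupp i hwi), mul_add]
  refine lt_of_le_of_ne (sum_mul_le_sum_mul hw fun i hi => le_sup' x (hsupp i hi))
    fun heq => hθ ?_
  have hconst := eq_on_of_sum_mul_eq hF hmin hw hsupp hi₀ hle (by rw [hmean, heq, mul_add])
  have hM : M = 0 := by
    have h₀ := hx i₀ (hsupp i₀ hi₀)
    rw [hconst i₀ (hsupp i₀ hi₀), show x i₀ = 0 by simp [x, centeredVecMul_apply]] at h₀
    linarith
  ext i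
  by_cases hi : i ∈ F
  · rw [Pi.zero_apply]
    linarith [hconst i hi, hx i hi]
  · simp [x, centeredVecMul_apply, hi]

theorem exists_forall_softmaxLogLik_le (hF : FacialF A F)
    (hmin : ∀ F' : Finset I, FacialF A F' → (∀ i, w i ≠ 0 → i ∈ F') → F ⊆ F')
    (hw : ∀ i, 0 ≤ w i) (hsupp : ∀ i, w i ≠ 0 → i ∈ F) (hi₀ : w i₀ ≠ 0) :
    ∃ θs : J → ℝ, ∀ θ, softmaxLogLik F w (θ ᵥ* A) ≤ softmaxLogLik F w (θs ᵥ* A) := by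
  have hne : F.Nonempty := ⟨i₀, hsupp i₀ hi₀⟩
  let U := LinearMap.range (centeredVecMul A F i₀)
  let φ : U → ℝ := fun x => ∑ i, w i * x.1 i - (∑ i, w i) * F.sup' hne x.1
  have hφ : Continuous φ := by
    have hcoord : ∀ i, Continuous fun x : U => x.1 i :=
      fun i => (continuous_apply i).comp continuous_subtype_val
    exact (continuous_finsetSum _ fun i _ => continuous_const.mul (hcoord i)).sub
      (continuous_const.mul (Continuous.finset_sup'_apply hne fun i _ => hcoord i))
  have hhom : ∀ r : ℝ, 0 ≤ r → ∀ x, φ (r • x) = r * φ x := fun r hr x => by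
    simp only [φ, Submodule.coe_smul, Pi.smul_apply, smul_eq_mul, ← mul₀_sup' hr,
      mul_left_comm (w _) r, ← mul_sum]
    ring
  have hneg : ∀ x, x ≠ 0 → φ x < 0 := by
    rintro ⟨_, θ, rfl⟩ hθ
    exact sub_neg.2 (sum_mul_centeredVecMul_lt hF hmin hw hsupp hi₀
      fun h => hθ (Subtype.ext h))
  obtain ⟨⟨_, θs, rfl⟩, hθs⟩ := Continuous.exists_forall_ge_of_le_homogeneous
    ((continuous_softmaxLogLik hne).comp continuous_subtype_val) hφ hhom hneg
    fun x => softmaxLogLik_le_sup' hne hw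
  exact ⟨θs, fun θ => by
    simpa only [Function.comp_apply, softmaxLogLik_centeredVecMul hsupp hne] using hθs ⟨_, θ, rfl⟩⟩

end Existence

section MLE

variable {I J : Type} [Fintype I] [Fintype J] [DecidableEq I] {A : Matrix J I ℝ}
  {F : Finset I} {w : I → ℝ} {θs : J → ℝ}

lemma mulVec_ptrunc_of_forall_le (hne : F.Nonempty)
    (hθs : ∀ θ, softmaxLogLik F w (θ ᵥ* A) ≤ softmaxLogLik F w (θs ᵥ* A)) (j : J) :
    (∑ i, w i) * (A *ᵥ ptrunc A F θs) j = ∑ i, w i * A j i := by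
  classical
  have hline : ∀ s : ℝ, (θs + s • Pi.single j 1) ᵥ* A = θs ᵥ* A + s • A j := fun s => by
    rw [add_vecMul, smul_vecMul, single_one_vecMul]
    rfl
  rw [ptrunc_eq_softmax]
  exact (sum_mul_eq_of_forall_le hne fun s => hline s ▸ hθs _).symm

lemma sum_mul_log_le_of_mem_closure (hne : F.Nonempty) (hw : ∀ i, 0 ≤ w i)
    (hsupp : ∀ i, w i ≠ 0 → i ∈ F)
    (hθs : ∀ θ, softmaxLogLik F w (θ ᵥ* A) ≤ softmaxLogLik F w (θs ᵥ* A)) {q : I → ℝ}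
    (hq : q ∈ closure (expFam A)) (hq0 : ∀ i, w i ≠ 0 → q i ≠ 0) :
    ∑ i, w i * log (q i) ≤ ∑ i, w i * log (ptrunc A F θs i) := by
  have hcont : ContinuousAt (fun q : I → ℝ => ∑ i, w i * log (q i)) q := by
    refine tendsto_finsetSum _ fun i _ => ?_
    by_cases hwi : w i = 0
    · simp [hwi]
    · exact continuousAt_const.mul ((continuous_apply i).continuousAt.log (hq0 i hwi))
  refine ContinuousWithinAt.closure_le hq hcont.continuousWithinAt continuousWithinAt_const ?_
  rw [expFam_eq_range_softmax, ptrunc_eq_softmax]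
  rintro _ ⟨θ, rfl⟩
  rw [sum_mul_log_softmax fun i _ => mem_univ i, sum_mul_log_softmax hsupp]
  exact (softmaxLogLik_le_of_subset hne (subset_univ F) (sum_nonneg fun i _ => hw i)).trans
    (hθs θ)

/-- `∑ (p - q) (log p - log q)` has nonnegative terms and equals the pairing of `θ - θ'` with
`A (p - q) = 0`. -/
lemma ptrunc_eq_of_mulVec_eq (hne : F.Nonempty) {θ θ' : J → ℝ}
    (h : A *ᵥ ptrunc A F θ = A *ᵥ ptrunc A F θ') : ptrunc A F θ = ptrunc A F θ' := by
  rw [ptrunc_eq_softmax, ptrunc_eq_softmax] at h ⊢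
  set p := softmax F (θ ᵥ* A)
  set q := softmax F (θ' ᵥ* A)
  set c := log (∑ k ∈ F, exp ((θ ᵥ* A) k)) - log (∑ k ∈ F, exp ((θ' ᵥ* A) k))
  have hterm : ∀ i, (p i - q i) * (log (p i) - log (q i))
      = (p i - q i) * (((θ - θ') ᵥ* A) i - c) := fun i => by
    by_cases hi : i ∈ F
    · rw [log_softmax hi, log_softmax hi, sub_vecMul, Pi.sub_apply]
      ring
    · simp [p, q, softmax_of_notMem hi]
  have hpair : ∑ i, (p i - q i) * ((θ - θ') ᵥ* A) i = 0 := by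
    change (p - q) ⬝ᵥ ((θ - θ') ᵥ* A) = 0
    rw [dotProduct_comm, ← dotProduct_mulVec, mulVec_sub, h, sub_self, dotProduct_zero]
  have hzero : ∑ i, (p i - q i) * (log (p i) - log (q i)) = 0 := by
    simp only [hterm, mul_sub, sum_sub_distrib, hpair, ← sum_mul, sum_softmax hne, p, q]
    ring
  have hnonneg : ∀ i ∈ univ, 0 ≤ (p i - q i) * (log (p i) - log (q i)) := fun i _ => by
    by_cases hi : i ∈ F
    · exact sub_mul_log_sub_nonneg (softmax_pos hi) (softmax_pos hi)
    · simp [p, q, softmax_of_notMem hi]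
  ext i
  by_cases hi : i ∈ F
  · rcases mul_eq_zero.1 ((sum_eq_zero_iff_of_nonneg hnonneg).1 hzero i (mem_univ i)) with h | h
    · linarith
    · exact log_injOn_pos (softmax_pos hi) (softmax_pos hi) (sub_eq_zero.1 h)
  · simp [p, q, softmax_of_notMem hi]

end MLE

theorem extended_MLE_general {I J : Type} [Fintype I] [Fintype J] [DecidableEq I]
    (A : J → I → ℝ) (n : I → ℕ) (N : ℕ) (hN : N = ∑ i, n i) (hNpos : 0 < N)
    (t : J → ℝ) (ht : ∀ j, t j = ∑ i, (n i : ℝ) * A j i)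
    (Ft : Finset I) (hFt : FacialF A Ft ∧ (∀ i, n i ≠ 0 → i ∈ Ft) ∧
      ∀ F' : Finset I, FacialF A F' → (∀ i, n i ≠ 0 → i ∈ F') → Ft ⊆ F') :
    ∃! p : I → ℝ,
      p ∈ closure (expFam A) ∧ (∀ i, n i ≠ 0 → p i ≠ 0) ∧
      (∀ q ∈ closure (expFam A), (∀ i, n i ≠ 0 → q i ≠ 0) →
        ∑ i, (n i : ℝ) * Real.log (q i) ≤ ∑ i, (n i : ℝ) * Real.log (p i)) ∧
      (∀ j, ∑ i, A j i * p i = t j / N) ∧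
      (∀ i, p i ≠ 0 ↔ i ∈ Ft) ∧
      (∃ θ : J → ℝ, p = ptrunc A Ft θ) := by
  obtain ⟨hF, hsupp, hmin⟩ := hFt
  obtain ⟨i₀, hi₀⟩ : ∃ i, n i ≠ 0 := by
    by_contra! h
    simp [hN, h] at hNpos
  have hne : Ft.Nonempty := ⟨i₀, hsupp i₀ hi₀⟩
  have hw : ∀ i, 0 ≤ (n i : ℝ) := fun i => Nat.cast_nonneg _
  have hcast : ∀ i, (n i : ℝ) ≠ 0 ↔ n i ≠ 0 := fun i => Nat.cast_ne_zero
  obtain ⟨θs, hθs⟩ := exists_forall_softmaxLogLik_le (A := A) hF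
    (fun F' hF' h => hmin F' hF' fun i hi => h i ((hcast i).2 hi)) hw
    (fun i hi => hsupp i ((hcast i).1 hi)) ((hcast i₀).2 hi₀)
  have hmean : ∀ j, ∑ i, A j i * ptrunc A Ft θs i = t j / N := fun j => by
    rw [eq_div_iff (by positivity), ht, mul_comm, hN, Nat.cast_sum]
    exact mulVec_ptrunc_of_forall_le hne hθs j
  refine ⟨ptrunc A Ft θs, ⟨hF.ptrunc_mem_closure_expFam hne θs, fun i hi => ?_,
    fun q hq hq0 => ?_, hmean, fun i => ?_, θs, rfl⟩, ?_⟩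
  · exact ptrunc_ne_zero_iff.2 (hsupp i hi)
  · exact sum_mul_log_le_of_mem_closure hne hw (fun i hi => hsupp i ((hcast i).1 hi)) hθs hq
      fun i hi => hq0 i ((hcast i).1 hi)
  · exact ptrunc_ne_zero_iff
  · rintro _ ⟨-, -, -, hmean', -, θ, rfl⟩
    exact ptrunc_eq_of_mulVec_eq hne ((funext hmean').trans (funext hmean).symm)

/-- Given counts `n` with sufficient statistic `t = A n` and
`N = ∑ n i > 0`, the log-likelihood `p ↦ ∑ n(i) log p(i)` attains a unique maximum `p*`
over the closure of `E_A` (distributions whose support misses `supp n` have likelihood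
`−∞` and are excluded from the comparison), and the extended MLE `p*` satisfies:
(1) `A p* = t/N`; (2) `supp(p*) = F_t`, the smallest facial set containing `supp(n)`;
(3) `p* ∈ E_{F_t, A}`. -/
theorem extended_MLE {I J : Type} [Fintype I] [Fintype J] [DecidableEq I] [Nonempty I]
    (A : J → I → ℝ) (n : I → ℕ) (N : ℕ) (hN : N = ∑ i, n i) (hNpos : 0 < N)
    (t : J → ℝ) (ht : ∀ j, t j = ∑ i, (n i : ℝ) * A j i)
    (Ft : Finset I) (hFt : FacialF A Ft ∧ (∀ i, n i ≠ 0 → i ∈ Ft) ∧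
      ∀ F' : Finset I, FacialF A F' → (∀ i, n i ≠ 0 → i ∈ F') → Ft ⊆ F') :
    ∃! p : I → ℝ,
      p ∈ closure (expFam A) ∧ (∀ i, n i ≠ 0 → p i ≠ 0) ∧
      (∀ q ∈ closure (expFam A), (∀ i, n i ≠ 0 → q i ≠ 0) →
        ∑ i, (n i : ℝ) * Real.log (q i) ≤ ∑ i, (n i : ℝ) * Real.log (p i)) ∧
      (∀ j, ∑ i, A j i * p i = t j / N) ∧
      (∀ i, p i ≠ 0 ↔ i ∈ Ft) ∧
      (∃ θ : J → ℝ, p = ptrunc A Ft θ) :=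
  extended_MLE_general A n N hN hNpos t ht Ft hFt
end

section
/- Let Δ be reducible into components Δ|_{V₁} and Δ|_{V₂} along a complete separator. If F₁ ⊆ I_{V₁} and F₂ ⊆ I_{V₂} are facial sets with respect to Δ|_{V₁} and Δ|_{V₂}, then π_{V₁}^{-1}(F₁) ∩ π_{V₂}^{-1}(F₂) is a facial set with respect to Δ. Consequently, for any T ⊆ I, F_Δ(T) = π_{V₁}^{-1}(F_{Δ|_{V₁}}(π_{V₁}(T))) ∩ π_{V₂}^{-1}(F_{Δ|_{V₂}}(π_{V₂}(T))). -/
/-!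
A face of the marginal polytope is the set of minimisers of a functional in the row space of
`A_Δ`, i.e. of a sum of functions each depending only on the coordinates in one face of `Δ`.
For `Δ = Δ|_{V₁} ∪ Δ|_{V₂}` such a functional splits as `A + B` with `A` depending on `V₁` and
`B` on `V₂`. Pulled-back functionals of `Δ|_{V₁}` and `Δ|_{V₂}` add up to a functional of `Δ`
whose face is the intersection of the pulled-back faces. Conversely, if `x` agrees with `j ∈ F`
on `V₁` and with `k ∈ F` on `V₂`, then `x` and the point glued the other way round together take
the value of `j` plus that of `k`, so `x ∈ F`. Finally, minimising `B` over the fibres of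
`π_{V₁}` gives a function of the separator coordinates, which is in the row space of `Δ|_{V₁}`
because the separator is complete; added to `A` it exposes `π_{V₁}(F)`. So `π_{V_k}(F_Δ(T))`
is a face containing `π_{V_k}(T)`, and gluing gives `F_Δ(T) ⊇ π_{V₁}⁻¹(G₁) ∩ π_{V₂}⁻¹(G₂)`.
-/

/-- The pairing `⟨g, f_i⟩` with the design-matrix column `f_i` of the hierarchical model
of `Δ`: the entry of `f_i` at row `(D, x)` is `1` iff `D ∈ Δ` and `i` agrees with `x`
on `D`. -/
def hdot {V : Type} [Fintype V] [DecidableEq V] {ι : V → Type} [∀ v, Fintype (ι v)]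
    [∀ v, DecidableEq (ι v)] (Δ : Finset (Finset V))
    (g : Finset V × (∀ v, ι v) → ℝ) (i : ∀ v, ι v) : ℝ :=
  ∑ p : Finset V × (∀ v, ι v),
    g p * (if p.1 ∈ Δ ∧ ∀ v ∈ p.1, i v = p.2 v then 1 else 0)

/-- `F` is a facial set of the marginal polytope of `Δ`. -/
def HFacial {V : Type} [Fintype V] [DecidableEq V] {ι : V → Type} [∀ v, Fintype (ι v)]
    [∀ v, DecidableEq (ι v)] (Δ : Finset (Finset V)) (F : Set (∀ v, ι v)) : Prop :=
  ∃ (g : Finset V × (∀ v, ι v) → ℝ) (c : ℝ),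
    (∀ i, c ≤ hdot Δ g i) ∧ ∀ i, i ∈ F ↔ hdot Δ g i = c

/-- `F` is the smallest facial set of `Δ` containing `T`. -/
def HSmallest {V : Type} [Fintype V] [DecidableEq V] {ι : V → Type} [∀ v, Fintype (ι v)]
    [∀ v, DecidableEq (ι v)] (Δ : Finset (Finset V)) (T F : Set (∀ v, ι v)) : Prop :=
  HFacial Δ F ∧ T ⊆ F ∧ ∀ F', HFacial Δ F' → T ⊆ F' → F ⊆ F'

/-- The induced subcomplex `Δ|_{V'}`, as a simplicial complex on the vertex set `V'`. -/
def hinduced {V : Type} [DecidableEq V] (Δ : Finset (Finset V)) (V' : Finset V) :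
    Finset (Finset {v // v ∈ V'}) :=
  (Δ.filter (· ⊆ V')).image (Finset.subtype (· ∈ V'))

/-- The coordinate projection `π_{V'} : I → I_{V'}`. -/
def hproj {V : Type} {ι : V → Type} (V' : Finset V) (i : ∀ v, ι v) :
    ∀ v' : {v // v ∈ V'}, ι v'.1 :=
  fun v' => i v'.1

open Function

section DependsOn

variable {V : Type*} {ι : V → Type*} (R : Type*) [Semiring R]

def dependsOnSubmodule (s : Set V) : Submodule R ((∀ v, ι v) → R) where
  carrier := {φ | DependsOn φ s}
  add_mem' hφ hψ _ _ h := by simp only [Pi.add_apply, hφ h, hψ h]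
  zero_mem' _ _ _ := rfl
  smul_mem' c _ hφ _ _ h := by simp only [Pi.smul_apply, hφ h]

end DependsOn

section IsExposedBy

variable {α β γ : Type*}

/-- `F` is the set where `φ` takes the value `c`, a lower bound of `φ` (so `F = ∅` when `c` is not
attained). -/
def IsExposedBy [Preorder γ] (φ : α → γ) (F : Set α) : Prop :=
  ∃ c, (∀ x, c ≤ φ x) ∧ ∀ x, x ∈ F ↔ φ x = c

theorem IsExposedBy.add [AddCommMonoid γ] [PartialOrder γ] [IsOrderedCancelAddMonoid γ]
    {φ ψ : α → γ} {F G : Set α} (hF : IsExposedBy φ F) (hG : IsExposedBy ψ G) :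
    IsExposedBy (φ + ψ) (F ∩ G) := by
  obtain ⟨c, hc, hFc⟩ := hF
  obtain ⟨d, hd, hGd⟩ := hG
  refine ⟨c + d, fun x => add_le_add (hc x) (hd x), fun x => ?_⟩
  rw [Set.mem_inter_iff, hFc, hGd, Pi.add_apply, eq_comm (a := φ x + ψ x),
    add_eq_add_iff_eq_and_eq (hc x) (hd x), eq_comm (a := c), eq_comm (a := d)]

theorem IsExposedBy.comp [Preorder γ] {φ : α → γ} {F : Set α} (hF : IsExposedBy φ F)
    (f : β → α) : IsExposedBy (φ ∘ f) (f ⁻¹' F) := by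
  obtain ⟨c, hc, hFc⟩ := hF
  exact ⟨c, fun x => hc (f x), fun x => hFc (f x)⟩

theorem IsExposedBy.image [PartialOrder γ] {φ : α → γ} {F : Set α} (hF : IsExposedBy φ F)
    {f : α → β} {ψ : β → γ} (hψ_le : ∀ x, ψ (f x) ≤ φ x)
    (hψ_eq : ∀ y, ∃ x, f x = y ∧ φ x = ψ y) : IsExposedBy ψ (f '' F) := by
  obtain ⟨c, hc, hFc⟩ := hF
  have hcψ (y : β) : c ≤ ψ y := by
    obtain ⟨x, -, hx⟩ := hψ_eq y
    exact hx ▸ hc x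
  refine ⟨c, hcψ, fun y => ⟨?_, fun hy => ?_⟩⟩
  · rintro ⟨x, hx, rfl⟩
    exact le_antisymm ((hFc x).1 hx ▸ hψ_le x) (hcψ _)
  · obtain ⟨x, rfl, hx⟩ := hψ_eq y
    exact ⟨x, (hFc x).2 (hx.trans hy), rfl⟩

end IsExposedBy

section RowSpace

variable {V : Type*} {ι : V → Type*}

/-- The row space of the design matrix `A_Δ`. -/
def hrowSpace (Δ : Finset (Finset V)) : Submodule ℝ ((∀ v, ι v) → ℝ) :=
  ⨆ D ∈ Δ, dependsOnSubmodule ℝ (D : Set V)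

theorem dependsOnSubmodule_le_hrowSpace {Δ : Finset (Finset V)} {D : Finset V} (hD : D ∈ Δ) :
    dependsOnSubmodule ℝ (D : Set V) ≤ hrowSpace (ι := ι) Δ :=
  le_iSup₂ (f := fun D (_ : D ∈ Δ) => dependsOnSubmodule ℝ (D : Set V)) D hD

theorem hrowSpace_union [DecidableEq V] (Δ₁ Δ₂ : Finset (Finset V)) :
    hrowSpace (ι := ι) (Δ₁ ∪ Δ₂) = hrowSpace Δ₁ ⊔ hrowSpace Δ₂ :=
  Finset.iSup_union

theorem hrowSpace_filter_subset_le [DecidableEq V] (Δ : Finset (Finset V)) (s : Finset V) :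
    hrowSpace (ι := ι) (Δ.filter (· ⊆ s)) ≤ dependsOnSubmodule ℝ (s : Set V) :=
  iSup₂_le fun _ hD _ hφ => DependsOn.mono (Finset.coe_subset.2 (Finset.mem_filter.1 hD).2) hφ

end RowSpace

section Projection

variable {V : Type} [DecidableEq V] {ι : V → Type}

@[simp]
theorem hproj_updateFinset (s : Finset V) (x : ∀ v, ι v) (y : ∀ v' : {v // v ∈ s}, ι v'.1) :
    hproj s (updateFinset x s y) = y :=
  restrict_updateFinset x y

@[simp]
theorem updateFinset_hproj (s : Finset V) (x : ∀ v, ι v) : updateFinset x s (hproj s x) = x :=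
  updateFinset_restrict x

theorem hrowSpace_hinduced_le_comap (Δ : Finset (Finset V)) (s : Finset V) :
    hrowSpace (hinduced Δ s) ≤
      (hrowSpace (ι := ι) Δ).comap (LinearMap.funLeft ℝ ℝ (hproj s)) := by
  refine iSup₂_le fun D' hD' ψ hψ => ?_
  obtain ⟨D, hD, rfl⟩ := Finset.mem_image.1 hD'
  exact dependsOnSubmodule_le_hrowSpace (Finset.mem_filter.1 hD).1
    fun x y h => hψ fun v hv => h v.1 (Finset.mem_subtype.1 hv)

theorem hrowSpace_filter_le_map [Nonempty (∀ v, ι v)] (Δ : Finset (Finset V)) (s : Finset V) :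
    hrowSpace (ι := ι) (Δ.filter (· ⊆ s)) ≤
      (hrowSpace (hinduced Δ s)).map (LinearMap.funLeft ℝ ℝ (hproj s)) := by
  obtain ⟨d⟩ := ‹Nonempty (∀ v, ι v)›
  refine iSup₂_le fun D hD φ hφ => ⟨φ ∘ updateFinset d s, ?_, ?_⟩
  · have hDs := (Finset.mem_filter.1 hD).2
    refine dependsOnSubmodule_le_hrowSpace (Finset.mem_image_of_mem _ hD) fun j j' h => ?_
    refine hφ fun v hv => ?_
    have hv' : v ∈ D := hv
    simp [updateFinset, hDs hv', h ⟨v, hDs hv'⟩ (by simpa using hv')]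
  · ext x
    exact hφ fun v hv => by simp [hproj, updateFinset, (Finset.mem_filter.1 hD).2 hv]

theorem exists_fibrewise_min_mem_hrowSpace_hinduced [Fintype V] [∀ v, Fintype (ι v)]
    [Nonempty (∀ v, ι v)]
    {Δ : Finset (Finset V)} {V₁ V₂ : Finset V}
    (hsplit : Δ = Δ.filter (· ⊆ V₁) ∪ Δ.filter (· ⊆ V₂)) (hcomplete : V₁ ∩ V₂ ∈ Δ)
    {φ : (∀ v, ι v) → ℝ} (hφ : φ ∈ hrowSpace Δ) :
    ∃ ψ ∈ hrowSpace (hinduced Δ V₁), (∀ x, ψ (hproj V₁ x) ≤ φ x) ∧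
      ∀ j, ∃ x, hproj V₁ x = j ∧ φ x = ψ j := by
  rw [hsplit, hrowSpace_union, Submodule.mem_sup] at hφ
  obtain ⟨A, hA, B, hB, rfl⟩ := hφ
  obtain ⟨A', hA', rfl⟩ := hrowSpace_filter_le_map Δ V₁ hA
  have hB' : DependsOn B V₂ := hrowSpace_filter_subset_le Δ V₂ hB
  -- `B` only sees `V₂`, so its minimum over a fibre of `hproj V₁` depends only on the separator
  set m : (∀ v' : {v // v ∈ V₁}, ι v'.1) → ℝ := fun j => ⨅ z, B (updateFinset z V₁ j)
  have hS : (V₁ ∩ V₂).subtype (· ∈ V₁) ∈ hinduced Δ V₁ :=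
    Finset.mem_image_of_mem _ (Finset.mem_filter.2 ⟨hcomplete, Finset.inter_subset_left⟩)
  have hm : m ∈ hrowSpace (hinduced Δ V₁) := by
    refine dependsOnSubmodule_le_hrowSpace hS fun j j' h => iInf_congr fun z => hB' fun v hv => ?_
    by_cases hv₁ : v ∈ V₁
    · simp [updateFinset, hv₁, h ⟨v, hv₁⟩ (by simp [hv₁, Finset.mem_coe.1 hv])]
    · simp [updateFinset, hv₁]
  refine ⟨A' + m, add_mem hA' hm, fun x => ?_, fun j => ?_⟩
  · have hmx : m (hproj V₁ x) ≤ B x :=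
      (ciInf_le (f := fun z => B (updateFinset z V₁ (hproj V₁ x)))
        (Set.finite_range _).bddBelow x).trans_eq (congrArg B (updateFinset_hproj V₁ x))
    simpa [LinearMap.funLeft_apply] using hmx
  · obtain ⟨z, hz⟩ := exists_eq_ciInf_of_finite (f := fun z => B (updateFinset z V₁ j))
    refine ⟨updateFinset z V₁ j, restrict_updateFinset z j, ?_⟩
    simp only [Pi.add_apply, LinearMap.funLeft_apply, m, ← hz, hproj_updateFinset]

end Projection

/-- The row of the design matrix `A_Δ` indexed by `p = (D, x)`. -/
def hrow {V : Type} [Fintype V] [DecidableEq V] {ι : V → Type} [∀ v, DecidableEq (ι v)]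
    (Δ : Finset (Finset V)) (p : Finset V × (∀ v, ι v)) : (∀ v, ι v) → ℝ :=
  fun i => if p.1 ∈ Δ ∧ ∀ v ∈ p.1, i v = p.2 v then 1 else 0

section Design

variable {V : Type} [Fintype V] [DecidableEq V] {ι : V → Type} [∀ v, Fintype (ι v)]
  [∀ v, DecidableEq (ι v)]

theorem hdot_eq_sum_hrow (Δ : Finset (Finset V)) (g : Finset V × (∀ v, ι v) → ℝ) :
    hdot Δ g = ∑ p, g p • hrow Δ p := by
  ext i
  simp [hdot, hrow, Finset.sum_apply]

theorem mem_span_range_hrow_of_dependsOn {Δ : Finset (Finset V)} {D : Finset V} (hD : D ∈ Δ)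
    {φ : (∀ v, ι v) → ℝ} (hφ : DependsOn φ D) : φ ∈ Submodule.span ℝ (Set.range (hrow Δ)) := by
  rcases isEmpty_or_nonempty (∀ v, ι v) with hI | ⟨⟨d⟩⟩
  · exact Subsingleton.elim (0 : (∀ v, ι v) → ℝ) φ ▸ zero_mem _
  have hφ_eq :
      φ = ∑ w : (∀ v : D, ι v), φ (updateFinset d D w) • hrow Δ (D, updateFinset d D w) := by
    ext i
    have hrow_eq (w : ∀ v : D, ι v) :
        hrow Δ (D, updateFinset d D w) i = if D.restrict i = w then 1 else 0 := by
      simp only [hrow, hD, true_and, funext_iff, Subtype.forall, Finset.restrict, updateFinset]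
      exact if_congr (forall₂_congr fun v hv => by rw [dif_pos hv]) rfl rfl
    simp only [Finset.sum_apply, Pi.smul_apply, smul_eq_mul, hrow_eq, mul_ite, mul_one, mul_zero,
      Finset.sum_ite_eq, Finset.mem_univ, if_true]
    exact hφ fun v hv => by simp [updateFinset, Finset.mem_coe.1 hv]
  rw [hφ_eq]
  exact Submodule.sum_mem _ fun w _ => Submodule.smul_mem _ _ (Submodule.subset_span ⟨_, rfl⟩)

theorem span_range_hrow (Δ : Finset (Finset V)) :
    Submodule.span ℝ (Set.range (hrow Δ)) = hrowSpace (ι := ι) Δ := by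
  refine le_antisymm (Submodule.span_le.2 (Set.range_subset_iff.2 fun p => ?_))
    (iSup₂_le fun D hD φ hφ => mem_span_range_hrow_of_dependsOn hD hφ)
  by_cases hp : p.1 ∈ Δ
  · exact dependsOnSubmodule_le_hrowSpace hp fun x y h =>
      if_congr (and_congr_right fun _ => forall₂_congr fun v hv => by rw [h v hv]) rfl rfl
  · have : hrow Δ p = 0 := by ext; simp [hrow, hp]
    exact this ▸ zero_mem _

theorem exists_hdot_eq_iff_mem_hrowSpace {Δ : Finset (Finset V)} {φ : (∀ v, ι v) → ℝ} :
    (∃ g, hdot Δ g = φ) ↔ φ ∈ hrowSpace Δ := by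
  simp only [hdot_eq_sum_hrow, ← span_range_hrow, Submodule.mem_span_range_iff_exists_fun]

theorem hfacial_iff {Δ : Finset (Finset V)} {F : Set (∀ v, ι v)} :
    HFacial Δ F ↔ ∃ φ ∈ hrowSpace Δ, IsExposedBy φ F := by
  constructor
  · rintro ⟨g, hg⟩
    exact ⟨hdot Δ g, exists_hdot_eq_iff_mem_hrowSpace.1 ⟨g, rfl⟩, hg⟩
  · rintro ⟨φ, hφ, hF⟩
    obtain ⟨g, rfl⟩ := exists_hdot_eq_iff_mem_hrowSpace.2 hφ
    exact ⟨g, hF⟩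

end Design

section Reducible

variable {V : Type} [Fintype V] [DecidableEq V] {ι : V → Type} [∀ v, Fintype (ι v)]
  [∀ v, DecidableEq (ι v)]

theorem HFacial.inter {Δ : Finset (Finset V)} {F G : Set (∀ v, ι v)} (hF : HFacial Δ F)
    (hG : HFacial Δ G) : HFacial Δ (F ∩ G) := by
  obtain ⟨φ, hφ, hF⟩ := hfacial_iff.1 hF
  obtain ⟨ψ, hψ, hG⟩ := hfacial_iff.1 hG
  exact hfacial_iff.2 ⟨φ + ψ, add_mem hφ hψ, hF.add hG⟩

theorem HFacial.preimage_hproj {Δ : Finset (Finset V)} {s : Finset V}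
    {F : Set (∀ v' : {v // v ∈ s}, ι v'.1)} (hF : HFacial (hinduced Δ s) F) :
    HFacial Δ (hproj s ⁻¹' F) := by
  obtain ⟨ψ, hψ, hF⟩ := hfacial_iff.1 hF
  exact hfacial_iff.2 ⟨_, hrowSpace_hinduced_le_comap Δ s hψ, hF.comp (hproj s)⟩

theorem HFacial.image_hproj [Nonempty (∀ v, ι v)] {Δ : Finset (Finset V)} {V₁ V₂ : Finset V}
    (hsplit : Δ = Δ.filter (· ⊆ V₁) ∪ Δ.filter (· ⊆ V₂)) (hcomplete : V₁ ∩ V₂ ∈ Δ)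
    {F : Set (∀ v, ι v)} (hF : HFacial Δ F) : HFacial (hinduced Δ V₁) (hproj V₁ '' F) := by
  obtain ⟨φ, hφ, hF⟩ := hfacial_iff.1 hF
  obtain ⟨ψ, hψ, hψ_le, hψ_eq⟩ := exists_fibrewise_min_mem_hrowSpace_hinduced hsplit hcomplete hφ
  exact hfacial_iff.2 ⟨ψ, hψ, hF.image hψ_le hψ_eq⟩

theorem HFacial.mem_of_agree {Δ : Finset (Finset V)} {V₁ V₂ : Finset V}
    (hsplit : Δ = Δ.filter (· ⊆ V₁) ∪ Δ.filter (· ⊆ V₂)) {F : Set (∀ v, ι v)} (hF : HFacial Δ F)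
    {x j k : ∀ v, ι v} (hj : j ∈ F) (hk : k ∈ F) (hxj : ∀ v ∈ V₁, x v = j v)
    (hxk : ∀ v ∈ V₂, x v = k v) : x ∈ F := by
  obtain ⟨φ, hφ, c, hc, hFc⟩ := hfacial_iff.1 hF
  rw [hsplit, hrowSpace_union, Submodule.mem_sup] at hφ
  obtain ⟨A, hA, B, hB, rfl⟩ := hφ
  have hA' : DependsOn A V₁ := hrowSpace_filter_subset_le Δ V₁ hA
  have hB' : DependsOn B V₂ := hrowSpace_filter_subset_le Δ V₂ hB
  -- `y` glues the other halves, so the values of `x` and `y` add up to those of `j` and `k`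
  have hyA : A (V₁.piecewise k j) = A k := hA' fun v hv => V₁.piecewise_eq_of_mem _ _ hv
  have hyB : B (V₁.piecewise k j) = B j := hB' fun v hv => by
    by_cases hv₁ : v ∈ V₁
    · rw [V₁.piecewise_eq_of_mem _ _ hv₁, ← hxk v hv, hxj v hv₁]
    · exact V₁.piecewise_eq_of_notMem _ _ hv₁
  have hy := hc (V₁.piecewise k j)
  have hjc := (hFc j).1 hj
  have hkc := (hFc k).1 hk
  refine (hFc x).2 (le_antisymm ?_ (hc x))
  simp only [Pi.add_apply, hA' hxj, hB' hxk, hyA, hyB] at hy hjc hkc ⊢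
  linarith

end Reducible

theorem facial_glue_of_reducible_general {V : Type} [Fintype V] [DecidableEq V]
    {ι : V → Type} [∀ v, Fintype (ι v)] [∀ v, DecidableEq (ι v)]
    (Δ : Finset (Finset V))
    (V₁ V₂ : Finset V)
    (hsplit : Δ = Δ.filter (· ⊆ V₁) ∪ Δ.filter (· ⊆ V₂))
    (hcomplete : V₁ ∩ V₂ ∈ Δ) :
    (∀ (F₁ : Set (∀ v' : {v // v ∈ V₁}, ι v'.1)) (F₂ : Set (∀ v' : {v // v ∈ V₂}, ι v'.1)),
      HFacial (hinduced Δ V₁) F₁ → HFacial (hinduced Δ V₂) F₂ →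
      HFacial Δ (hproj V₁ ⁻¹' F₁ ∩ hproj V₂ ⁻¹' F₂)) ∧
    (∀ (T F : Set (∀ v, ι v)) (G₁ : Set (∀ v' : {v // v ∈ V₁}, ι v'.1))
        (G₂ : Set (∀ v' : {v // v ∈ V₂}, ι v'.1)),
      HSmallest Δ T F →
      HSmallest (hinduced Δ V₁) (hproj V₁ '' T) G₁ →
      HSmallest (hinduced Δ V₂) (hproj V₂ '' T) G₂ →
      F = hproj V₁ ⁻¹' G₁ ∩ hproj V₂ ⁻¹' G₂) := by
  refine ⟨fun F₁ F₂ h₁ h₂ => h₁.preimage_hproj.inter h₂.preimage_hproj,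
    fun T F G₁ G₂ hF hG₁ hG₂ => ?_⟩
  rcases isEmpty_or_nonempty (∀ v, ι v) with hI | hI
  · exact Set.ext fun x => isEmptyElim x
  refine (hF.2.2 _ (hG₁.1.preimage_hproj.inter hG₂.1.preimage_hproj)
    fun t ht => ⟨hG₁.2.1 ⟨t, ht, rfl⟩, hG₂.2.1 ⟨t, ht, rfl⟩⟩).antisymm ?_
  rintro x ⟨hx₁, hx₂⟩
  have hsplit' : Δ = Δ.filter (· ⊆ V₂) ∪ Δ.filter (· ⊆ V₁) := hsplit.trans (Finset.union_comm _ _)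
  have hcomplete' : V₂ ∩ V₁ ∈ Δ := Finset.inter_comm V₁ V₂ ▸ hcomplete
  obtain ⟨j, hj, hjx⟩ :=
    hG₁.2.2 _ (hF.1.image_hproj hsplit hcomplete) (Set.image_mono hF.2.1) hx₁
  obtain ⟨k, hk, hkx⟩ :=
    hG₂.2.2 _ (hF.1.image_hproj hsplit' hcomplete') (Set.image_mono hF.2.1) hx₂
  exact hF.1.mem_of_agree hsplit hj hk (fun v hv => (congrFun hjx ⟨v, hv⟩).symm)
    fun v hv => (congrFun hkx ⟨v, hv⟩).symm

/-- Let `Δ` be reducible into components `Δ|_{V₁}`, `Δ|_{V₂}` along a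
complete separator. If `F₁`, `F₂` are facial sets for `Δ|_{V₁}`, `Δ|_{V₂}`, then
`π_{V₁}⁻¹(F₁) ∩ π_{V₂}⁻¹(F₂)` is facial for `Δ`; consequently, for any `T ⊆ I`,
`F_Δ(T) = π_{V₁}⁻¹(F_{Δ|V₁}(π_{V₁}(T))) ∩ π_{V₂}⁻¹(F_{Δ|V₂}(π_{V₂}(T)))`. -/
theorem facial_glue_of_reducible {V : Type} [Fintype V] [DecidableEq V]
    {ι : V → Type} [∀ v, Fintype (ι v)] [∀ v, DecidableEq (ι v)]
    (Δ : Finset (Finset V)) (hΔ : ∀ D ∈ Δ, ∀ D' ⊆ D, D' ∈ Δ)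
    (V₁ V₂ : Finset V) (hcover : V₁ ∪ V₂ = Finset.univ)
    (hsplit : Δ = Δ.filter (· ⊆ V₁) ∪ Δ.filter (· ⊆ V₂))
    (hcomplete : V₁ ∩ V₂ ∈ Δ) :
    (∀ (F₁ : Set (∀ v' : {v // v ∈ V₁}, ι v'.1)) (F₂ : Set (∀ v' : {v // v ∈ V₂}, ι v'.1)),
      HFacial (hinduced Δ V₁) F₁ → HFacial (hinduced Δ V₂) F₂ →
      HFacial Δ (hproj V₁ ⁻¹' F₁ ∩ hproj V₂ ⁻¹' F₂)) ∧
    (∀ (T F : Set (∀ v, ι v)) (G₁ : Set (∀ v' : {v // v ∈ V₁}, ι v'.1))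
        (G₂ : Set (∀ v' : {v // v ∈ V₂}, ι v'.1)),
      HSmallest Δ T F →
      HSmallest (hinduced Δ V₁) (hproj V₁ '' T) G₁ →
      HSmallest (hinduced Δ V₂) (hproj V₂ '' T) G₂ →
      F = hproj V₁ ⁻¹' G₁ ∩ hproj V₂ ⁻¹' G₂) :=
  facial_glue_of_reducible_general Δ V₁ V₂ hsplit hcomplete
end
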